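/- arXiv:2603.00673 — 2 statements merged into one kernel-verified Lean document; each statement's English description precedes it below -/
import Mathlib

section
/- For any positive integers s, r, and k with k ≤ (r+1)/2 + s and 2k - r ≥ 0, the alternating sum ∑_{i=2k-r}^{2s+1} (-1)^i · C(2s+1, i) · C(r+i, 2k) equals -C(r, 2k-2s-1). -/
/-- Binomial coefficient `C(n, k)` with integer lower index, zero when `k < 0`. -/
def chooseInt (n : ℕ) (k : ℤ) : ℤ := if 0 ≤ k then (n.choose k.toNat : ℤ) else 0

lemma chooseInt_succ (a : ℕ) (q : ℤ) :
    chooseInt (a + 1) q = chooseInt a q + chooseInt a (q - 1) := by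
  unfold chooseInt
  rcases lt_trichotomy q 0 with h | h | h
  · rw [if_neg (by omega), if_neg (by omega), if_neg (by omega)]; ring
  · subst h; simp
  · have h0 : (0:ℤ) ≤ q := le_of_lt h
    have h1 : (0:ℤ) ≤ q - 1 := by omega
    rw [if_pos h0, if_pos h0, if_pos h1]
    have ht : q.toNat = (q - 1).toNat + 1 := by omega
    rw [ht, Nat.choose_succ_succ]
    push_cast; ring

lemma aux_sum (n : ℕ) (r : ℕ) (m : ℤ) :
    ∑ i ∈ Finset.range (n + 1),
        (-1 : ℤ) ^ i * (Nat.choose n i : ℤ) * chooseInt (r + i) m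
      = (-1 : ℤ) ^ n * chooseInt r (m - n) := by
  induction n generalizing r m with
  | zero => simp
  | succ n ih =>
    have hsplit : ∑ i ∈ Finset.range (n + 2),
          (-1 : ℤ) ^ i * (Nat.choose (n+1) i : ℤ) * chooseInt (r + i) m
        = (∑ i ∈ Finset.range (n + 1),
            (-1 : ℤ) ^ i * (Nat.choose n i : ℤ) * chooseInt (r + i) m)
          - ∑ i ∈ Finset.range (n + 1),
            (-1 : ℤ) ^ i * (Nat.choose n i : ℤ) * chooseInt (r + 1 + i) m := by
      rw [Finset.sum_range_succ' (fun i => (-1 : ℤ) ^ i * (Nat.choose (n+1) i : ℤ)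
            * chooseInt (r + i) m) (n+1)]
      have : ∀ i, (-1 : ℤ) ^ (i+1) * (Nat.choose (n+1) (i+1) : ℤ) * chooseInt (r + (i+1)) m
          = (-1 : ℤ) ^ (i+1) * (Nat.choose n (i+1) : ℤ) * chooseInt (r + (i+1)) m
            - (-1 : ℤ) ^ i * (Nat.choose n i : ℤ) * chooseInt (r + 1 + i) m := by
        intro i
        rw [Nat.choose_succ_succ]
        have harg : r + (i + 1) = r + 1 + i := by ring
        rw [harg]
        push_cast
        ring
      rw [Finset.sum_congr rfl (fun i _ => this i)]
      rw [Finset.sum_sub_distrib]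
      have hlast : ∑ i ∈ Finset.range (n + 1),
            (-1 : ℤ) ^ (i+1) * (Nat.choose n (i+1) : ℤ) * chooseInt (r + (i+1)) m
            + (-1 : ℤ) ^ 0 * (Nat.choose (n+1) 0 : ℤ) * chooseInt (r + 0) m
          = ∑ i ∈ Finset.range (n + 1),
            (-1 : ℤ) ^ i * (Nat.choose n i : ℤ) * chooseInt (r + i) m := by
        have hc0 : ((Nat.choose (n+1) 0 : ℕ) : ℤ) = ((Nat.choose n 0 : ℕ) : ℤ) := by simp
        rw [hc0]
        rw [← Finset.sum_range_succ' (fun i => (-1 : ℤ) ^ i * (Nat.choose n i : ℤ)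
              * chooseInt (r + i) m) (n+1)]
        rw [Finset.sum_range_succ]
        simp
      linarith [hlast]
    rw [hsplit, ih r m]
    have hshift : ∑ i ∈ Finset.range (n + 1),
          (-1 : ℤ) ^ i * (Nat.choose n i : ℤ) * chooseInt (r + 1 + i) m
        = ∑ i ∈ Finset.range (n + 1),
            ((-1 : ℤ) ^ i * (Nat.choose n i : ℤ) * chooseInt (r + i) m
            + (-1 : ℤ) ^ i * (Nat.choose n i : ℤ) * chooseInt (r + i) (m - 1)) := by
      refine Finset.sum_congr rfl fun i _ => ?_
      have : r + 1 + i = (r + i) + 1 := by ring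
      rw [this, chooseInt_succ]
      ring
    rw [hshift, Finset.sum_add_distrib, ih r m, ih r (m - 1)]
    have : m - 1 - (n : ℤ) = m - ((n : ℕ) + 1 : ℕ) := by push_cast; ring
    rw [this]
    ring

theorem stmt_3 (s r k : ℕ) (hs : 0 < s) (hr : 0 < r) (hk : 0 < k)
    (hle : 2 * k ≤ r + 1 + 2 * s) (hkr : r ≤ 2 * k) :
    ∑ i ∈ Finset.Icc (2 * k - r) (2 * s + 1),
        (-1 : ℤ) ^ i * (Nat.choose (2 * s + 1) i : ℤ) * (Nat.choose (r + i) (2 * k) : ℤ) =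
      -chooseInt r (2 * k - 2 * s - 1) := by
  have hsub : Finset.Icc (2 * k - r) (2 * s + 1) ⊆ Finset.range (2 * s + 1 + 1) := by
    intro i hi
    simp only [Finset.mem_Icc] at hi
    simp only [Finset.mem_range]
    omega
  have hzero : ∀ i ∈ Finset.range (2 * s + 1 + 1),
      i ∉ Finset.Icc (2 * k - r) (2 * s + 1) →
      (-1 : ℤ) ^ i * (Nat.choose (2 * s + 1) i : ℤ) * (Nat.choose (r + i) (2 * k) : ℤ) = 0 := by
    intro i hi hni
    simp only [Finset.mem_range] at hi
    simp only [Finset.mem_Icc] at hni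
    have : r + i < 2 * k := by omega
    rw [Nat.choose_eq_zero_of_lt this]
    simp
  rw [Finset.sum_subset hsub hzero]
  have key := aux_sum (2 * s + 1) r (2 * k : ℤ)
  have hc : ∀ i, chooseInt (r + i) (2 * k : ℤ) = (Nat.choose (r + i) (2 * k) : ℤ) := by
    intro i
    unfold chooseInt
    rw [if_pos (by positivity)]
    have h : ((2 * (k:ℤ))).toNat = 2 * k := by omega
    rw [h]
  simp only [hc] at key
  rw [key]
  have h1 : (-1 : ℤ) ^ (2 * s + 1) = -1 := by
    rw [pow_succ, pow_mul]
    norm_num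
  rw [h1]
  have h2 : (2 * k : ℤ) - ((2 * s + 1 : ℕ) : ℤ) = 2 * (k : ℤ) - 2 * (s : ℤ) - 1 := by
    push_cast; ring
  rw [h2]
  ring
end

section
/- For every positive integer d, the multiple zeta value ζ(2,2,...,2) with d repetitions of 2 equals π^{2d}/(2d+1)!. -/
/-- The multiple zeta value `ζ(s₁,…,s_l) = ∑_{1 ≤ k₁ < ⋯ < k_l} ∏ 1/kᵢ^{sᵢ}`. -/
noncomputable def MZV (s : List ℕ) : ℝ :=
  ∑' f : {f : Fin s.length → ℕ+ // StrictMono f},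
    ∏ i : Fin s.length, (1 : ℝ) / ((f.1 i : ℕ) : ℝ) ^ s.get i

/-- The multiple t-value `t(s₁,…,s_l) = ∑_{1 ≤ k₁ < ⋯ < k_l} ∏ 1/(2kᵢ-1)^{sᵢ}`. -/
noncomputable def MTV (s : List ℕ) : ℝ :=
  ∑' f : {f : Fin s.length → ℕ+ // StrictMono f},
    ∏ i : Fin s.length, (1 : ℝ) / ((2 * (f.1 i : ℕ) - 1 : ℕ) : ℝ) ^ s.get i

/-! The numbers `e n = ζ(2,…,2)` (`n` twos) are the elementary symmetric functions of the
family `1/k²`, so their generating function `∑ e n tⁿ` is the infinite product `∏ (1 + t/k²)`.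
At `t = -x²` Euler's product turns this into `sin(πx)/(πx) = ∑ (-x²)ⁿ π²ⁿ/(2n+1)!`, and two
power series that agree for all `t < 0` have the same coefficients. -/

open Filter Topology Real FormalMultilinearSeries

noncomputable def esymmTsum {ι R : Type*} [CommSemiring R] [TopologicalSpace R] (a : ι → R)
    (n : ℕ) : R :=
  ∑' s : Set.powersetCard ι n, ∏ i ∈ (s : Finset ι), a i

@[simps]
def strictMonoEquivOrderEmbedding (α β : Type*) [LinearOrder α] [Preorder β] :
    {f : α → β // StrictMono f} ≃ (α ↪o β) where
  toFun f := OrderEmbedding.ofStrictMono f.1 f.2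
  invFun f := ⟨f, f.strictMono⟩
  left_inv _ := rfl
  right_inv _ := rfl

theorem tsum_strictMono_prod_eq_esymmTsum {ι R : Type*} [LinearOrder ι] [CommSemiring R]
    [TopologicalSpace R] (a : ι → R) (n : ℕ) :
    ∑' f : {f : Fin n → ι // StrictMono f}, ∏ i, a (f.1 i) = esymmTsum a n := by
  rw [esymmTsum, ← ((strictMonoEquivOrderEmbedding _ _).trans
    Set.powersetCard.ofFinEmbEquiv).tsum_eq]
  refine tsum_congr fun f ↦ ?_
  simp [Set.powersetCard.ofFinEmbEquiv_apply, Set.powersetCard.val_ofFinEmb]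

theorem hasSum_esymmTsum_mul_pow {ι R : Type*} [NormedCommRing R] [NormOneClass R]
    [CompleteSpace R] {a : ι → R} (ha : Summable fun i ↦ ‖a i‖) (t : R) :
    HasSum (fun n ↦ esymmTsum a n * t ^ n) (∏' i, (1 + t * a i)) := by
  have hta : Summable fun i ↦ ‖t * a i‖ :=
    (ha.mul_left ‖t‖).of_nonneg_of_le (fun _ ↦ norm_nonneg _) fun _ ↦ norm_mul_le _ _
  have h_finset := summable_finsetProd_of_summable_norm hta
  rw [tprod_one_add h_finset]
  refine (h_finset.hasSum.tsum_fiberwise Finset.card).congr_fun fun n ↦ ?_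
  have hsub : Summable fun s : Set.powersetCard ι n ↦ ∏ i ∈ (s : Finset ι), a i :=
    (summable_finsetProd_of_summable_norm ha).subtype _
  rw [esymmTsum, ← hsub.tsum_mul_right]
  refine tsum_congr fun s ↦ ?_
  rw [Finset.prod_mul_distrib, Finset.prod_const, s.2, mul_comm]

section PowerSeries

variable {𝕜 : Type*} [NontriviallyNormedField 𝕜]

theorem ofScalars_radius_pos_of_summable {c : ℕ → 𝕜} {t : 𝕜} (ht : t ≠ 0)
    (h : Summable fun n ↦ c n * t ^ n) : 0 < (ofScalars 𝕜 c).radius := by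
  refine lt_of_lt_of_le (ENNReal.coe_pos.2 (nnnorm_pos.2 ht))
    ((ofScalars 𝕜 c).le_radius_of_tendsto (l := 0) ?_)
  simpa [ofScalars_norm, norm_mul, norm_pow] using h.tendsto_atTop_zero.norm

theorem eq_of_frequently_tsum_mul_pow_eq [CompleteSpace 𝕜] {c c' : ℕ → 𝕜}
    (hc : 0 < (ofScalars 𝕜 c).radius) (hc' : 0 < (ofScalars 𝕜 c').radius)
    (h : ∃ᶠ t in 𝓝[≠] 0, ∑' n, c n * t ^ n = ∑' n, c' n * t ^ n) : c = c' := by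
  have hp := ((ofScalars 𝕜 c).hasFPowerSeriesOnBall hc).hasFPowerSeriesAt
  have hp' := ((ofScalars 𝕜 c').hasFPowerSeriesOnBall hc').hasFPowerSeriesAt
  have h_sum : ∀ c : ℕ → 𝕜, (ofScalars 𝕜 c).sum = fun t ↦ ∑' n, c n * t ^ n := fun c ↦
    ofScalarsSum_eq_tsum c
  rw [h_sum] at hp hp'
  exact ofScalars_series_injective _ _
    (hp.eq_formalMultilinearSeries_of_eventually hp'
      ((hp.analyticAt.frequently_eq_iff_eventually_eq hp'.analyticAt).1 h))

end PowerSeries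

theorem summable_one_div_pnat_pow {p : ℕ} (hp : 1 < p) :
    Summable fun k : ℕ+ ↦ 1 / ((k : ℕ) : ℝ) ^ p :=
  (Real.summable_one_div_nat_pow.2 hp).comp_injective PNat.coe_injective

theorem tprod_pnat_one_sub_sq_div_sq {x : ℝ} (hx : x ≠ 0) :
    ∏' k : ℕ+, (1 - x ^ 2 / ((k : ℕ) : ℝ) ^ 2) = sin (π * x) / (π * x) := by
  have hsum : Summable fun k : ℕ+ ↦ ‖-(x ^ 2 / ((k : ℕ) : ℝ) ^ 2)‖ := by
    simpa [div_eq_mul_inv] using (summable_one_div_pnat_pow one_lt_two).mul_left (x ^ 2)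
  have hmult := Equiv.pnatEquivNat.symm.multipliable_iff.2 (multipliable_one_add_of_summable hsum)
  simp_rw [sub_eq_add_neg]
  rw [← Equiv.pnatEquivNat.symm.tprod_eq]
  refine tendsto_nhds_unique hmult.hasProd.tendsto_prod_nat ?_
  have hπx : π * x ≠ 0 := mul_ne_zero pi_ne_zero hx
  refine ((tendsto_euler_sin_prod x).div_const (π * x)).congr fun n ↦ ?_
  rw [mul_div_right_comm, div_self hπx, one_mul]
  refine Finset.prod_congr rfl fun k _ ↦ ?_
  simp [sub_eq_add_neg]

theorem MZV_replicate (d s : ℕ) :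
    MZV (List.replicate d s) = esymmTsum (fun k : ℕ+ ↦ 1 / ((k : ℕ) : ℝ) ^ s) d := by
  calc MZV (List.replicate d s)
      = esymmTsum (fun k : ℕ+ ↦ 1 / ((k : ℕ) : ℝ) ^ s) (List.replicate d s).length := by
        rw [← tsum_strictMono_prod_eq_esymmTsum, MZV]
        simp
    _ = _ := by rw [List.length_replicate]

theorem hasSum_esymmTsum_one_div_sq_mul_pow {x : ℝ} (hx : x ≠ 0) :
    HasSum (fun n ↦ esymmTsum (fun k : ℕ+ ↦ 1 / ((k : ℕ) : ℝ) ^ 2) n * (-x ^ 2) ^ n)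
      (sin (π * x) / (π * x)) := by
  have hprod : ∏' k : ℕ+, (1 + -x ^ 2 * (1 / ((k : ℕ) : ℝ) ^ 2)) = sin (π * x) / (π * x) := by
    rw [← tprod_pnat_one_sub_sq_div_sq hx]
    exact tprod_congr fun k ↦ by ring
  exact hprod ▸ hasSum_esymmTsum_mul_pow (summable_one_div_pnat_pow one_lt_two).norm (-x ^ 2)

theorem hasSum_sin_pi_mul_div {x : ℝ} (hx : x ≠ 0) :
    HasSum (fun n ↦ π ^ (2 * n) / (Nat.factorial (2 * n + 1) : ℝ) * (-x ^ 2) ^ n)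
      (sin (π * x) / (π * x)) := by
  refine ((Real.hasSum_sin (π * x)).div_const (π * x)).congr_fun fun n ↦ ?_
  rw [neg_pow, ← pow_mul]
  field_simp
  ring

theorem stmt_4_general (d : ℕ) :
    MZV (List.replicate d 2) = Real.pi ^ (2 * d) / (Nat.factorial (2 * d + 1) : ℝ) := by
  set e := esymmTsum (fun k : ℕ+ ↦ 1 / ((k : ℕ) : ℝ) ^ 2)
  set c : ℕ → ℝ := fun n ↦ π ^ (2 * n) / (Nat.factorial (2 * n + 1) : ℝ)
  suffices e = c from (MZV_replicate d 2).trans (congrFun this d)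
  have h_neg : ∀ᶠ t in 𝓝[<] 0, ∑' n, e n * t ^ n = ∑' n, c n * t ^ n := by
    refine eventually_nhdsWithin_of_forall fun t (ht : t < 0) ↦ ?_
    have hx : √(-t) ≠ 0 := (sqrt_pos.2 (neg_pos.2 ht)).ne'
    have ht' : t = -√(-t) ^ 2 := by rw [sq_sqrt (neg_pos.2 ht).le, neg_neg]
    rw [ht', (hasSum_esymmTsum_one_div_sq_mul_pow hx).tsum_eq, (hasSum_sin_pi_mul_div hx).tsum_eq]
  exact eq_of_frequently_tsum_mul_pow_eq
    (ofScalars_radius_pos_of_summable (by norm_num)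
      (hasSum_esymmTsum_one_div_sq_mul_pow one_ne_zero).summable)
    (ofScalars_radius_pos_of_summable (by norm_num) (hasSum_sin_pi_mul_div one_ne_zero).summable)
    (h_neg.frequently.filter_mono (nhdsWithin_mono _ fun t ht ↦ ht.ne))

theorem stmt_4 (d : ℕ) (hd : 0 < d) :
    MZV (List.replicate d 2) = Real.pi ^ (2 * d) / (Nat.factorial (2 * d + 1) : ℝ) :=
  stmt_4_general d
end
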